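/- arXiv:2208.03917 — 3 statements merged into one kernel-verified Lean document; each statement's English description precedes it below -/
import Mathlib

section
/- Along any smooth solution of the system ρ(γ''(θ)+γ(θ))θ' + γ(θ)sin θ + γ'(θ)cos θ + β/ρ − 2λρ = 0, ρ' = cos θ, the quantity ρ(γ'(θ)cos θ + γ(θ)sin θ) + β log ρ − λρ² is constant in s. -/
open Real

/-! Differentiating `h(θ) = γ'(θ) cos θ + γ(θ) sin θ` gives `h'(θ) = (γ''(θ) + γ(θ)) cos θ`, the
`γ' sin θ` terms cancelling. With `ρ' = cos θ`, the derivative of `ρ h(θ) + β log ρ − λρ²` is then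
`cos θ` times the left-hand side of the first equation, hence zero. -/

/-- The paper's `h`. -/
noncomputable def anisotropicTerm (γ : ℝ → ℝ) (t : ℝ) : ℝ :=
  deriv γ t * cos t + γ t * sin t

theorem hasDerivAt_anisotropicTerm {γ : ℝ → ℝ} {t : ℝ} (hγ : DifferentiableAt ℝ γ t)
    (hγ' : DifferentiableAt ℝ (deriv γ) t) :
    HasDerivAt (anisotropicTerm γ) ((deriv (deriv γ) t + γ t) * cos t) t :=
  ((hγ'.hasDerivAt.mul (hasDerivAt_cos t)).add
    (hγ.hasDerivAt.mul (hasDerivAt_sin t))).congr_deriv (by ring)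

noncomputable def firstIntegral (γ : ℝ → ℝ) (β lam : ℝ) (ρ θ : ℝ → ℝ) (s : ℝ) : ℝ :=
  ρ s * anisotropicTerm γ (θ s) + β * log (ρ s) - lam * ρ s ^ 2

theorem hasDerivAt_firstIntegral {γ : ℝ → ℝ} {β lam : ℝ} {ρ θ : ℝ → ℝ} {s θ' : ℝ}
    (hγ : DifferentiableAt ℝ γ (θ s)) (hγ' : DifferentiableAt ℝ (deriv γ) (θ s))
    (hρ : HasDerivAt ρ (cos (θ s)) s) (hθ : HasDerivAt θ θ' s) (hρs : ρ s ≠ 0) :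
    HasDerivAt (firstIntegral γ β lam ρ θ)
      (cos (θ s) * (ρ s * (deriv (deriv γ) (θ s) + γ (θ s)) * θ' +
        anisotropicTerm γ (θ s) + β / ρ s - 2 * lam * ρ s)) s := by
  have hh := (hasDerivAt_anisotropicTerm hγ hγ').comp s hθ
  exact (((hρ.mul hh).add ((hρ.log hρs).const_mul β)).sub
    ((hρ.pow 2).const_mul lam)).congr_deriv (by simp only [Function.comp_apply]; field_simp; ring)

theorem first_integral_constant_general
    (γ : ℝ → ℝ) (hγ : ContDiff ℝ 2 γ)
    (β lam : ℝ)
    (ρ θ : ℝ → ℝ) (hρ : Differentiable ℝ ρ) (hθ : Differentiable ℝ θ)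
    (hρpos : ∀ s, 0 < ρ s)
    (hode : ∀ s, ρ s * (deriv (deriv γ) (θ s) + γ (θ s)) * deriv θ s +
        γ (θ s) * Real.sin (θ s) + deriv γ (θ s) * Real.cos (θ s) +
        β / ρ s - 2 * lam * ρ s = 0)
    (hρ' : ∀ s, deriv ρ s = Real.cos (θ s)) :
    ∀ s₁ s₂ : ℝ,
      ρ s₁ * (deriv γ (θ s₁) * Real.cos (θ s₁) + γ (θ s₁) * Real.sin (θ s₁)) +
          β * Real.log (ρ s₁) - lam * ρ s₁ ^ 2 =
        ρ s₂ * (deriv γ (θ s₂) * Real.cos (θ s₂) + γ (θ s₂) * Real.sin (θ s₂)) +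
          β * Real.log (ρ s₂) - lam * ρ s₂ ^ 2 := by
  have hderiv : ∀ s, HasDerivAt (firstIntegral γ β lam ρ θ) 0 s := fun s ↦ by
    have h := hasDerivAt_firstIntegral (β := β) (lam := lam)
      (hγ.differentiable two_ne_zero (θ s)) (hγ.differentiable_deriv_two (θ s))
      (hρ' s ▸ (hρ s).hasDerivAt) (hθ s).hasDerivAt (hρpos s).ne'
    convert h using 1
    rw [anisotropicTerm]
    linear_combination -cos (θ s) * hode s
  exact is_const_of_deriv_eq_zero (fun s ↦ (hderiv s).differentiableAt) (fun s ↦ (hderiv s).deriv)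

/-- First integral: along any smooth solution of
`ρ(γ''+γ)θ' + γ sin θ + γ' cos θ + β/ρ − 2λρ = 0`, `ρ' = cos θ`, the quantity
`ρ(γ' cos θ + γ sin θ) + β log ρ − λρ²` is constant. -/
theorem first_integral_constant
    (γ : ℝ → ℝ) (hγ : ContDiff ℝ 2 γ)
    (β lam : ℝ) (hβ : 0 < β) (hlam : 0 < lam)
    (ρ θ : ℝ → ℝ) (hρ : Differentiable ℝ ρ) (hθ : Differentiable ℝ θ)
    (hρpos : ∀ s, 0 < ρ s)
    (hode : ∀ s, ρ s * (deriv (deriv γ) (θ s) + γ (θ s)) * deriv θ s +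
        γ (θ s) * Real.sin (θ s) + deriv γ (θ s) * Real.cos (θ s) +
        β / ρ s - 2 * lam * ρ s = 0)
    (hρ' : ∀ s, deriv ρ s = Real.cos (θ s)) :
    ∀ s₁ s₂ : ℝ,
      ρ s₁ * (deriv γ (θ s₁) * Real.cos (θ s₁) + γ (θ s₁) * Real.sin (θ s₁)) +
          β * Real.log (ρ s₁) - lam * ρ s₁ ^ 2 =
        ρ s₂ * (deriv γ (θ s₂) * Real.cos (θ s₂) + γ (θ s₂) * Real.sin (θ s₂)) +
          β * Real.log (ρ s₂) - lam * ρ s₂ ^ 2 :=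
  first_integral_constant_general γ hγ β lam ρ θ hρ hθ hρpos hode hρ'
end

section
/- Let γ : ℝ → ℝ be smooth and 2π-periodic with γ + γ'' > 0 everywhere. Define h(θ) = γ'(θ)cos θ + γ(θ)sin θ. Then there exist unique θ₊ ∈ [−π/2, π/2] and θ₋ ∈ [π/2, 3π/2] with h(θ₊) = h(θ₋) = 0. -/
open Real

/-- For smooth, `2π`-periodic, positive `γ` with `γ + γ'' > 0`, the function
`h(θ) = γ'(θ)cos θ + γ(θ)sin θ` has a unique zero `θ₊ ∈ [−π/2, π/2]` and a
unique zero `θ₋ ∈ [π/2, 3π/2]`. -/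
theorem h_unique_zeros
    (γ : ℝ → ℝ) (hγs : ContDiff ℝ (⊤ : ℕ∞) γ) (hγp : Function.Periodic γ (2 * π))
    (hγpos : ∀ θ, 0 < γ θ)
    (hstab : ∀ θ, 0 < γ θ + deriv (deriv γ) θ)
    (h : ℝ → ℝ) (hh : ∀ θ, h θ = deriv γ θ * Real.cos θ + γ θ * Real.sin θ) :
    (∃! θp, θp ∈ Set.Icc (-(π / 2)) (π / 2) ∧ h θp = 0) ∧
      (∃! θm, θm ∈ Set.Icc (π / 2) (3 * π / 2) ∧ h θm = 0) := by
  have hfun : h = fun θ => deriv γ θ * Real.cos θ + γ θ * Real.sin θ := funext hh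
  subst hfun
  have hγd : Differentiable ℝ γ := hγs.differentiable (by simp)
  have hγi : ContDiff ℝ (⊤ : ℕ∞) γ := hγs.of_le (by simp)
  have hγ'd : Differentiable ℝ (deriv γ) :=
    ((contDiff_infty_iff_deriv.mp hγi).2).differentiable (by simp)
  set h : ℝ → ℝ := fun θ => deriv γ θ * Real.cos θ + γ θ * Real.sin θ with hdef
  have hderiv : ∀ θ, HasDerivAt h ((γ θ + deriv (deriv γ) θ) * Real.cos θ) θ := by
    intro θ
    have h1 : HasDerivAt (fun t => deriv γ t * Real.cos t)
        (deriv (deriv γ) θ * Real.cos θ + deriv γ θ * (-Real.sin θ)) θ :=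
      ((hγ'd θ).hasDerivAt).mul (Real.hasDerivAt_cos θ)
    have h2 : HasDerivAt (fun t => γ t * Real.sin t)
        (deriv γ θ * Real.sin θ + γ θ * Real.cos θ) θ :=
      ((hγd θ).hasDerivAt).mul (Real.hasDerivAt_sin θ)
    have := h1.add h2
    exact this.congr_deriv (by ring)
  have hcont : Continuous h := by
    have : Differentiable ℝ h := fun θ => (hderiv θ).differentiableAt
    exact this.continuous
  have hπ : (0:ℝ) < π := Real.pi_pos
  -- endpoint values
  have e1 : h (-(π/2)) = -γ (-(π/2)) := by
    simp [hdef, Real.cos_pi_div_two, Real.sin_pi_div_two]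
  have e2 : h (π/2) = γ (π/2) := by
    simp [hdef, Real.cos_pi_div_two, Real.sin_pi_div_two]
  have e3 : h (3*π/2) = -γ (3*π/2) := by
    have h32 : (3*π/2 : ℝ) = π + π/2 := by ring
    simp [hdef, h32, Real.cos_add, Real.sin_add, Real.cos_pi_div_two, Real.sin_pi_div_two]
  have lt1 : (-(π/2) : ℝ) < π/2 := by linarith
  have lt2 : (π/2 : ℝ) < 3*π/2 := by linarith
  constructor
  · -- increasing on [-π/2, π/2]
    have hmono : StrictMonoOn h (Set.Icc (-(π/2)) (π/2)) := by
      apply strictMonoOn_of_deriv_pos (convex_Icc _ _) hcont.continuousOn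
      intro x hx
      rw [interior_Icc] at hx
      rw [(hderiv x).deriv]
      exact mul_pos (hstab x) (Real.cos_pos_of_mem_Ioo hx)
    have hmem : (0:ℝ) ∈ Set.Icc (h (-(π/2))) (h (π/2)) := by
      rw [e1, e2]
      constructor <;> [linarith [hγpos (-(π/2))]; linarith [hγpos (π/2)]]
    obtain ⟨θp, hθp, hval⟩ := intermediate_value_Icc (le_of_lt lt1) hcont.continuousOn hmem
    refine ⟨θp, ⟨hθp, hval⟩, ?_⟩
    rintro y ⟨hy, hyval⟩
    exact hmono.injOn hy hθp (by rw [hyval, hval])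
  · -- decreasing on [π/2, 3π/2]
    have hmono : StrictAntiOn h (Set.Icc (π/2) (3*π/2)) := by
      apply strictAntiOn_of_deriv_neg (convex_Icc _ _) hcont.continuousOn
      intro x hx
      rw [interior_Icc] at hx
      rw [(hderiv x).deriv]
      have hcosneg : Real.cos x < 0 := by
        apply Real.cos_neg_of_pi_div_two_lt_of_lt hx.1
        linarith [hx.2]
      exact mul_neg_of_pos_of_neg (hstab x) hcosneg
    have hmem : (0:ℝ) ∈ Set.Icc (h (3*π/2)) (h (π/2)) := by
      rw [e2, e3]
      constructor <;> [linarith [hγpos (3*π/2)]; linarith [hγpos (π/2)]]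
    obtain ⟨θm, hθm, hval⟩ := intermediate_value_Icc' (le_of_lt lt2) hcont.continuousOn hmem
    refine ⟨θm, ⟨hθm, hval⟩, ?_⟩
    rintro y ⟨hy, hyval⟩
    exact hmono.injOn hy hθm (by rw [hyval, hval])
end

section
/- Let γ : ℝ → ℝ be C², 2π-periodic, positive, and let θ₋ ≠ θ₊. The jump condition γ(θ₊)τ(θ₊) − γ'(θ₊)ν(θ₊) = γ(θ₋)τ(θ₋) − γ'(θ₋)ν(θ₋) (continuity of capillary force) holds if and only if the Frank potential points g(θ₋) and g(θ₊) lie on a common tangent line of the Frank diagram, i.e., g(θ₊) − g(θ₋) is parallel to g'(θ₋) and g'(θ₊) is parallel to g'(θ₋). -/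
/-!
The Frank potential `g = γ⁻¹ ν` has `g' = γ⁻¹ τ - (γ'/γ²) ν`, so the capillary force is
`C = γ² g'`, while `g × g' = γ⁻²` because `ν × τ = 1`. Hence `C = (g × g')⁻¹ g'`, and the corner
condition becomes a statement about two points `a, b` with tangent vectors `A, B` satisfying
`a × A ≠ 0 ≠ b × B`: the vectors `(a × A)⁻¹ A` and `(b × B)⁻¹ B` agree iff `B ∥ A` and `b - a ∥ A`.
Given `B = u A`, both sides of the equivalence reduce to `b × A = a × A`, i.e. `(b - a) × A = 0`.
-/

open Real

namespace Plane

def cross (a b : ℝ × ℝ) : ℝ := a.1 * b.2 - a.2 * b.1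

@[simp]
lemma cross_self (a : ℝ × ℝ) : cross a a = 0 := by
  unfold cross; ring

@[simp]
lemma cross_smul_left (t : ℝ) (a b : ℝ × ℝ) : cross (t • a) b = t * cross a b := by
  simp only [cross, Prod.smul_fst, Prod.smul_snd, smul_eq_mul]; ring

@[simp]
lemma cross_smul_right (t : ℝ) (a b : ℝ × ℝ) : cross a (t • b) = t * cross a b := by
  simp only [cross, Prod.smul_fst, Prod.smul_snd, smul_eq_mul]; ring

@[simp]
lemma cross_add_right (a b c : ℝ × ℝ) : cross a (b + c) = cross a b + cross a c := by
  simp only [cross, Prod.fst_add, Prod.snd_add]; ring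

@[simp]
lemma cross_zero_right (a : ℝ × ℝ) : cross a 0 = 0 := by
  simp [cross]

@[simp]
lemma cross_sub_left (a b c : ℝ × ℝ) : cross (a - b) c = cross a c - cross b c := by
  simp only [cross, Prod.fst_sub, Prod.snd_sub]; ring

lemma exists_eq_smul_of_cross_eq_zero {a b : ℝ × ℝ} (hb : b ≠ 0) (h : cross a b = 0) :
    ∃ t : ℝ, a = t • b := by
  have hnorm : b.1 ^ 2 + b.2 ^ 2 ≠ 0 := by
    contrapose! hb
    ext <;> simp only [Prod.fst_zero, Prod.snd_zero] <;> nlinarith [sq_nonneg b.1, sq_nonneg b.2]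
  unfold cross at h
  refine ⟨(a.1 * b.1 + a.2 * b.2) / (b.1 ^ 2 + b.2 ^ 2), Prod.ext ?_ ?_⟩
  · simp only [Prod.smul_fst, smul_eq_mul]
    field_simp
    linear_combination b.2 * h
  · simp only [Prod.smul_snd, smul_eq_mul]
    field_simp
    linear_combination (-b.1) * h

lemma inv_cross_smul_eq_iff {a b A B : ℝ × ℝ} (ha : cross a A ≠ 0) (hb : cross b B ≠ 0) :
    (cross b B)⁻¹ • B = (cross a A)⁻¹ • A ↔
      (∃ t : ℝ, b - a = t • A) ∧ ∃ u : ℝ, B = u • A := by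
  have hA : A ≠ 0 := by rintro rfl; simp at ha
  constructor
  · intro h
    have hBA : B = (cross b B * (cross a A)⁻¹) • A := by
      rw [mul_smul, ← h, smul_inv_smul₀ hb]
    refine ⟨exists_eq_smul_of_cross_eq_zero hA ?_, _, hBA⟩
    have hbA := congrArg (cross b) hBA
    rw [cross_smul_right] at hbA
    rw [cross_sub_left]
    field_simp at hbA
    linear_combination -hbA
  · rintro ⟨⟨t, ht⟩, ⟨u, rfl⟩⟩
    have hbA : cross b A = cross a A := by
      have := congrArg (cross · A) ht
      simp only [cross_sub_left, cross_smul_left, cross_self, mul_zero] at this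
      linarith
    have hu : u ≠ 0 := by rintro rfl; simp at hb
    rw [cross_smul_right, hbA, smul_smul]
    congr 1
    field_simp

lemma cross_inv_smul_inv_smul_add_smul {n t : ℝ × ℝ} (h : cross n t = 1) (c k : ℝ) :
    cross (c⁻¹ • n) (c⁻¹ • t + k • n) = (c ^ 2)⁻¹ := by
  simp only [cross_add_right, cross_smul_left, cross_smul_right, cross_self, h]
  ring

lemma cross_normal_tangent (θ : ℝ) : cross (sin θ, -cos θ) (cos θ, sin θ) = 1 := by
  simp only [cross]
  linear_combination sin_sq_add_cos_sq θ

end Plane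

lemma hasDerivAt_sin_neg_cos (θ : ℝ) :
    HasDerivAt (fun θ => (sin θ, -cos θ)) (cos θ, sin θ) θ := by
  simpa using (hasDerivAt_sin θ).prodMk (hasDerivAt_cos θ).neg

lemma sq_smul_inv_smul_add_smul {K V : Type*} [Field K] [AddCommGroup V] [Module K V]
    {c : K} (hc : c ≠ 0) (c' : K) (t n : V) :
    c ^ 2 • (c⁻¹ • t + (-c' / c ^ 2) • n) = c • t - c' • n := by
  rw [smul_add, smul_smul, smul_smul, sq, mul_assoc, mul_inv_cancel₀ hc, mul_one,
    mul_div_cancel₀ _ (mul_ne_zero hc hc), neg_smul, sub_eq_add_neg]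

open Plane in
theorem corner_condition_iff_maxwell_line_general
    (γ : ℝ → ℝ) (hγ : ContDiff ℝ 2 γ)
    (hγpos : ∀ θ, 0 < γ θ)
    (τ ν g C : ℝ → ℝ × ℝ)
    (hτ : ∀ θ, τ θ = (Real.cos θ, Real.sin θ))
    (hν : ∀ θ, ν θ = (Real.sin θ, -Real.cos θ))
    (hg : ∀ θ, g θ = (γ θ)⁻¹ • ν θ)
    (hC : ∀ θ, C θ = γ θ • τ θ - deriv γ θ • ν θ)
    (θm θp : ℝ) :
    C θp = C θm ↔
      ((∃ t : ℝ, g θp - g θm = t • deriv g θm) ∧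
        (∃ u : ℝ, deriv g θp = u • deriv g θm)) := by
  have hγ0 θ : γ θ ≠ 0 := (hγpos θ).ne'
  have hγ' θ : HasDerivAt γ (deriv γ θ) θ :=
    (hγ.differentiable (by norm_num) θ).hasDerivAt
  have hντ θ : cross (ν θ) (τ θ) = 1 := by rw [hν, hτ]; exact cross_normal_tangent θ
  have hg' θ : HasDerivAt g ((γ θ)⁻¹ • τ θ + (-deriv γ θ / γ θ ^ 2) • ν θ) θ := by
    rw [funext hg, funext hν, hτ]
    exact ((hγ' θ).inv (hγ0 θ)).smul (hasDerivAt_sin_neg_cos θ)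
  have hcross θ : cross (g θ) (deriv g θ) = (γ θ ^ 2)⁻¹ := by
    rw [(hg' θ).deriv, hg]
    exact cross_inv_smul_inv_smul_add_smul (hντ θ) _ _
  have hC' θ : C θ = (cross (g θ) (deriv g θ))⁻¹ • deriv g θ := by
    rw [hcross, inv_inv, (hg' θ).deriv, sq_smul_inv_smul_add_smul (hγ0 θ), hC]
  have hcross0 θ : cross (g θ) (deriv g θ) ≠ 0 := by simp [hcross, hγ0]
  rw [hC' θp, hC' θm]
  exact inv_cross_smul_eq_iff (hcross0 θm) (hcross0 θp)

/-- Maxwell-line characterization of corners: continuity of the capillary force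
`C(θ) = γ τ − γ' ν` across a corner `θ₋ ≠ θ₊` holds iff the Frank potential
points `g(θ₋)`, `g(θ₊)` lie on a common tangent line of the Frank diagram. -/
theorem corner_condition_iff_maxwell_line
    (γ : ℝ → ℝ) (hγ : ContDiff ℝ 2 γ) (hγp : Function.Periodic γ (2 * π))
    (hγpos : ∀ θ, 0 < γ θ)
    (τ ν g C : ℝ → ℝ × ℝ)
    (hτ : ∀ θ, τ θ = (Real.cos θ, Real.sin θ))
    (hν : ∀ θ, ν θ = (Real.sin θ, -Real.cos θ))
    (hg : ∀ θ, g θ = (γ θ)⁻¹ • ν θ)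
    (hC : ∀ θ, C θ = γ θ • τ θ - deriv γ θ • ν θ)
    (θm θp : ℝ) (hne : θm ≠ θp) :
    C θp = C θm ↔
      ((∃ t : ℝ, g θp - g θm = t • deriv g θm) ∧
        (∃ u : ℝ, deriv g θp = u • deriv g θm)) :=
  corner_condition_iff_maxwell_line_general γ hγ hγpos τ ν g C hτ hν hg hC θm θp
end
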